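/- Good fundamental domain leads to ping-pong: let Γ = ⟨γ₁,…,γ_g⟩ with good fundamental domain F = P¹ \ (B₁∪…∪B_g∪B₁'∪…∪B_g'). If γ has reduced word h₁h₂⋯h_k (k ≥ 1) and b ∈ P¹ satisfies b ∉ B_j' when h_k = γ_j and b ∉ B_j when h_k = γ_j⁻¹, then γb ∈ B_i⁺ if h₁ = γ_i and γb ∈ B_i'⁺ if h₁ = γ_i⁻¹. -/

import Mathlib

/-!
The letter `γ_i` maps everything outside `B_i'` into `B_i⁺`, and `γ_i⁻¹` maps everything outside
`B_i` into `B_i'⁺`. Because the word is reduced, the ball a letter lands in is disjoint from the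
ball the preceding letter must avoid, so reading the word from right to left the point `b` is
bounced from ball to ball and ends in the target ball of the first letter.
-/

open Pointwise

theorem List.prod_map_smul_mem_of_isChain {α G X : Type*} [Monoid G] [MulAction G X]
    (f : α → G) (T F : α → Set X) {R : α → α → Prop}
    (hmaps : ∀ a x, x ∉ F a → f a • x ∈ T a)
    (hnext : ∀ a a', R a a' → _root_.Disjoint (T a') (F a))
    {b : X} : ∀ (l : List α) (hl : l ≠ []), l.IsChain R → b ∉ F (l.getLast hl) →
      (l.map f).prod • b ∈ T (l.head hl)
  | [a], _, _, hb => by simpa using hmaps a b hb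
  | a :: a' :: l, _, hchain, hb => by
    rw [List.isChain_cons_cons] at hchain
    have hmem := List.prod_map_smul_mem_of_isChain f T F hmaps hnext (a' :: l) (by simp)
      hchain.2 hb
    rw [List.map_cons, List.prod_cons, mul_smul]
    exact hmaps a _ (Set.disjoint_left.mp (hnext a a' hchain.1) hmem)

structure IsGoodFundamentalDomain {ι G X : Type*} [Group G] [MulAction G X]
    (γ : ι → G) (B B' Bp B'p : ι → Set X) : Prop where
  subset : ∀ i, B i ⊆ Bp i
  subset' : ∀ i, B' i ⊆ B'p i
  disjoint : ∀ i j, i ≠ j → Disjoint (Bp i) (Bp j)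
  disjoint' : ∀ i j, i ≠ j → Disjoint (B'p i) (B'p j)
  disjoint_prime : ∀ i j, Disjoint (Bp i) (B'p j)
  smul_compl : ∀ i, γ i • (B' i)ᶜ = Bp i
  inv_smul_compl : ∀ i, (γ i)⁻¹ • (B i)ᶜ = B'p i

namespace IsGoodFundamentalDomain

variable {ι G X : Type*} [Group G] [MulAction G X] {γ : ι → G} {B B' Bp B'p : ι → Set X}

def letter (γ : ι → G) (a : ι × Bool) : G := if a.2 then γ a.1 else (γ a.1)⁻¹

theorem letter_smul_mem (h : IsGoodFundamentalDomain γ B B' Bp B'p) (a : ι × Bool) {x : X}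
    (hx : x ∉ (if a.2 then B' else B) a.1) :
    letter γ a • x ∈ (if a.2 then Bp else B'p) a.1 := by
  obtain ⟨i, _ | _⟩ := a <;> simp only [letter, Bool.false_eq_true, if_true, if_false] at hx ⊢
  · rw [← h.inv_smul_compl i]; exact Set.smul_mem_smul_set hx
  · rw [← h.smul_compl i]; exact Set.smul_mem_smul_set hx

theorem disjoint_of_ne_inv (h : IsGoodFundamentalDomain γ B B' Bp B'p) {a a' : ι × Bool}
    (hred : a.1 = a'.1 → a.2 = a'.2) :
    Disjoint ((if a'.2 then Bp else B'p) a'.1) ((if a.2 then B' else B) a.1) := by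
  obtain ⟨i, s⟩ := a
  obtain ⟨j, s'⟩ := a'
  have hne : s ≠ s' → j ≠ i := fun hs hji => hs (hred hji.symm)
  cases s <;> cases s'
  · exact (h.disjoint_prime i j).symm.mono_right (h.subset i)
  · exact (h.disjoint j i (hne (by decide))).mono_right (h.subset i)
  · exact (h.disjoint' j i (hne (by decide))).mono_right (h.subset' i)
  · exact (h.disjoint_prime j i).mono_right (h.subset' i)

theorem prod_letter_smul_mem (h : IsGoodFundamentalDomain γ B B' Bp B'p) (l : List (ι × Bool))
    (hl : l ≠ []) (hred : l.IsChain fun a a' => a.1 = a'.1 → a.2 = a'.2) {b : X}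
    (hb : b ∉ (if (l.getLast hl).2 then B' else B) (l.getLast hl).1) :
    (l.map (letter γ)).prod • b ∈ (if (l.head hl).2 then Bp else B'p) (l.head hl).1 :=
  List.prod_map_smul_mem_of_isChain (letter γ) (fun a => (if a.2 then Bp else B'p) a.1)
    (fun a => (if a.2 then B' else B) a.1) h.letter_smul_mem (fun _ _ => h.disjoint_of_ne_inv)
    l hl hred hb

end IsGoodFundamentalDomain

/-- Ping-pong from a good fundamental domain (Lemma 2.4): let `Γ = ⟨γ₁,…,γ_g⟩`
act on `P¹` with good fundamental domain `P¹ \ (B₁ ∪ … ∪ B_g ∪ B₁' ∪ … ∪ B_g')`,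
so that the closed balls `B_i⁺, B_i'⁺` are pairwise disjoint,
`γ_i(P¹ \ B_i') = B_i⁺` and `γ_i⁻¹(P¹ \ B_i) = B_i'⁺`.  If `γ = h₁h₂⋯h_k` is a
nonempty reduced word and `b` avoids `B_j'` when `h_k = γ_j` (resp. `B_j` when
`h_k = γ_j⁻¹`), then `γ·b ∈ B_i⁺` if `h₁ = γ_i` and `γ·b ∈ B_i'⁺` if `h₁ = γ_i⁻¹`. -/
theorem ping_pong_good_fundamental_domain {X : Type*} {G : Type*} [Group G] [MulAction G X]
    {g : ℕ} (γ : Fin g → G) (B B' Bp B'p : Fin g → Set X)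
    (hBsub : ∀ i, B i ⊆ Bp i) (hB'sub : ∀ i, B' i ⊆ B'p i)
    (hdisj1 : ∀ i j, i ≠ j → Disjoint (Bp i) (Bp j))
    (hdisj2 : ∀ i j, i ≠ j → Disjoint (B'p i) (B'p j))
    (hdisj3 : ∀ i j, Disjoint (Bp i) (B'p j))
    (hmap : ∀ i, γ i • (B' i)ᶜ = Bp i)
    (hmap' : ∀ i, (γ i)⁻¹ • (B i)ᶜ = B'p i)
    {k : ℕ} (hk : 1 ≤ k) (idx : Fin k → Fin g) (sgn : Fin k → Bool)
    (hred : ∀ (j : ℕ) (hj : j + 1 < k),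
      idx ⟨j, by omega⟩ = idx ⟨j + 1, hj⟩ → sgn ⟨j, by omega⟩ = sgn ⟨j + 1, hj⟩)
    (b : X)
    (hb : if sgn ⟨k - 1, by omega⟩ then b ∉ B' (idx ⟨k - 1, by omega⟩)
          else b ∉ B (idx ⟨k - 1, by omega⟩)) :
    (if sgn ⟨0, by omega⟩ then
        ((List.ofFn fun j : Fin k => if sgn j then γ (idx j) else (γ (idx j))⁻¹).prod • b
          ∈ Bp (idx ⟨0, by omega⟩))
      else
        ((List.ofFn fun j : Fin k => if sgn j then γ (idx j) else (γ (idx j))⁻¹).prod • b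
          ∈ B'p (idx ⟨0, by omega⟩))) := by
  have hΓ : IsGoodFundamentalDomain γ B B' Bp B'p :=
    ⟨hBsub, hB'sub, hdisj1, hdisj2, hdisj3, hmap, hmap'⟩
  set w := List.ofFn fun j : Fin k => (idx j, sgn j)
  have hw : w ≠ [] := by rw [Ne, List.ofFn_eq_nil_iff]; omega
  have hb' : b ∉ (if (w.getLast hw).2 then B' else B) (w.getLast hw).1 := by
    rw [List.getLast_ofFn]; split_ifs at hb ⊢ <;> assumption
  have hmem := hΓ.prod_letter_smul_mem w hw (List.isChain_ofFn.mpr hred) hb'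
  rw [List.head_ofFn, List.map_ofFn] at hmem
  split_ifs at hmem ⊢ <;> exact hmem
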